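/- arXiv:math/0609843 — 3 statements merged into one kernel-verified Lean document; each statement's English description precedes it below -/
import Mathlib

section
/- For bases Δ and Δ' of Φ and admissible subsets Y ⊆ Δ and Y' ⊆ Δ', one has F_Y^Δ = F_{Y'}^{Δ'} if and only if ⟨Y⟩ = ⟨Y'⟩ and λ₀(Δ) − λ₀(Δ') ∈ ⟨Y⟩. -/
/-!
Common setup for Werner, "Compactifications of Bruhat-Tits buildings associated to
linear representations":  a finite-dimensional real vector space `A` (the apartment),
a root system `Φ` in the dual space together with a Weyl-group invariant inner
product, a finite Weyl-invariant set `Λ` of (K-)weights, and for every basis `Δ`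
of `Φ` a highest weight `lam0 Δ ∈ Λ`.
-/

open Pointwise Filter Topology Bornology
open scoped Classical

noncomputable section

/-- A set `M` of linear forms is *connected* if the graph with vertex set `M` and an
edge between `m` and `n` iff `inn m n ≠ 0` is connected. -/
def GraphConnected {D : Type*} (inn : D → D → ℝ) (M : Set D) : Prop :=
  ∀ m ∈ M, ∀ n ∈ M,
    Relation.ReflTransGen (fun x y => x ∈ M ∧ y ∈ M ∧ inn x y ≠ 0) m n

/-- The coefficients of `μ` as a linear combination of the elements of `Δ` (chosen
arbitrarily if one exists; it is unique when `Δ` is linearly independent). -/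
noncomputable def coeffs {A : Type*} [AddCommGroup A] [Module ℝ A]
    (Δ : Finset (Module.Dual ℝ A)) (μ : Module.Dual ℝ A) : Module.Dual ℝ A → ℝ :=
  if h : ∃ n : Module.Dual ℝ A → ℝ, μ = ∑ b ∈ Δ, n b • b then h.choose else fun _ => 0

/-- The support `[μ]` of `μ` with respect to the basis `Δ`: the set of elements of `Δ`
whose coefficient in `μ` is nonzero. -/
noncomputable def supp {A : Type*} [AddCommGroup A] [Module ℝ A]
    (Δ : Finset (Module.Dual ℝ A)) (μ : Module.Dual ℝ A) : Finset (Module.Dual ℝ A) :=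
  Δ.filter fun a => coeffs Δ μ a ≠ 0

/-- Raw data: a finite set `Φ` of roots in the dual of `A`, a product `inn` on the dual,
a finite set `Λ` of weights, and a highest weight `lam0 Δ` for every basis `Δ`. -/
structure RootWeightData (A : Type*) [NormedAddCommGroup A] [NormedSpace ℝ A]
    [FiniteDimensional ℝ A] where
  Φ : Finset (Module.Dual ℝ A)
  inn : Module.Dual ℝ A → Module.Dual ℝ A → ℝ
  Λ : Finset (Module.Dual ℝ A)
  lam0 : Finset (Module.Dual ℝ A) → Module.Dual ℝ A

namespace RootWeightData

variable {A : Type*} [NormedAddCommGroup A] [NormedSpace ℝ A] [FiniteDimensional ℝ A]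
variable (S : RootWeightData A)

/-- The reflection associated to the root `a`. -/
def refl (a : Module.Dual ℝ A) : Function.End (Module.Dual ℝ A) :=
  fun x => x - (2 * S.inn x a / S.inn a a) • a

/-- The Weyl group `W`, generated by the reflections in the roots. -/
def weyl : Submonoid (Function.End (Module.Dual ℝ A)) :=
  Submonoid.closure {f | ∃ a ∈ S.Φ, f = S.refl a}

/-- `Δ` is a basis of the root system `Φ`: a linearly independent subset of `Φ` such
that every root is a nonnegative or nonpositive linear combination of `Δ`. -/
def IsBase (Δ : Finset (Module.Dual ℝ A)) : Prop :=
  (↑Δ : Set (Module.Dual ℝ A)) ⊆ (S.Φ : Set (Module.Dual ℝ A)) ∧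
  LinearIndependent ℝ (fun a : (Δ : Set (Module.Dual ℝ A)) => (a : Module.Dual ℝ A)) ∧
  ∀ a ∈ S.Φ,
    (∃ n : Module.Dual ℝ A → ℝ, (∀ b ∈ Δ, 0 ≤ n b) ∧ a = ∑ b ∈ Δ, n b • b) ∨
    (∃ n : Module.Dual ℝ A → ℝ, (∀ b ∈ Δ, 0 ≤ n b) ∧ a = -∑ b ∈ Δ, n b • b)

/-- `Y` is an admissible subset of the basis `Δ`: `Y ⊆ Δ` and `Y ∪ {λ₀(Δ)}` is
connected. -/
def Admissible (Δ Y : Finset (Module.Dual ℝ A)) : Prop :=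
  Y ⊆ Δ ∧ GraphConnected S.inn ((↑Y : Set (Module.Dual ℝ A)) ∪ {S.lam0 Δ})

end RootWeightData

/-- The whole setting of Werner's paper: the data of `RootWeightData`, where `Φ` is a
(crystallographic, possibly non-reduced) root system spanning the dual of `A`, `inn` is
a Weyl-invariant inner product, `Λ` is a finite Weyl-invariant set of weights, and
`lam0` picks, Weyl-equivariantly, a highest weight for each basis, dominating all of
`Λ`; moreover a subset of a basis is admissible iff it is the support of
`λ₀(Δ) - λ` for some weight `λ`. -/
structure RootWeightSystem (A : Type*) [NormedAddCommGroup A] [NormedSpace ℝ A]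
    [FiniteDimensional ℝ A] extends RootWeightData A where
  inn_symm : ∀ x y, inn x y = inn y x
  inn_add_left : ∀ x y z, inn (x + y) z = inn x z + inn y z
  inn_smul_left : ∀ (c : ℝ) (x y), inn (c • x) y = c * inn x y
  inn_pos : ∀ x, x ≠ 0 → 0 < inn x x
  root_ne_zero : ∀ a ∈ Φ, a ≠ (0 : Module.Dual ℝ A)
  neg_mem : ∀ a ∈ Φ, -a ∈ Φ
  refl_mem : ∀ a ∈ Φ, ∀ b ∈ Φ, toRootWeightData.refl a b ∈ Φ
  inn_weyl_invariant :
    ∀ w ∈ toRootWeightData.weyl, ∀ x y, inn (w x) (w y) = inn x y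
  phi_spans : Submodule.span ℝ (Φ : Set (Module.Dual ℝ A)) = ⊤
  exists_base : ∃ Δ, toRootWeightData.IsBase Δ
  base_cover : ∀ x : A, ∃ Δ, toRootWeightData.IsBase Δ ∧ ∀ a ∈ Δ, 0 ≤ a x
  base_weyl : ∀ w ∈ toRootWeightData.weyl, ∀ Δ, toRootWeightData.IsBase Δ →
    toRootWeightData.IsBase (Δ.image (w : Module.Dual ℝ A → Module.Dual ℝ A))
  lam0_mem : ∀ Δ, toRootWeightData.IsBase Δ → lam0 Δ ∈ Λ
  lam0_dominates : ∀ Δ, toRootWeightData.IsBase Δ → ∀ l ∈ Λ,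
    ∃ n : Module.Dual ℝ A → ℝ, (∀ a ∈ Δ, 0 ≤ n a) ∧ lam0 Δ - l = ∑ a ∈ Δ, n a • a
  weight_weyl_invariant : ∀ w ∈ toRootWeightData.weyl, ∀ l ∈ Λ, w l ∈ Λ
  lam0_equivariant : ∀ w ∈ toRootWeightData.weyl, ∀ Δ, toRootWeightData.IsBase Δ →
    lam0 (Δ.image (w : Module.Dual ℝ A → Module.Dual ℝ A)) = w (lam0 Δ)
  integrality : ∀ l ∈ Λ, ∀ a ∈ Φ, ∃ k : ℤ, 2 * inn l a / inn a a = (k : ℝ)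
  admissible_iff_support : ∀ Δ, toRootWeightData.IsBase Δ → ∀ Y ⊆ Δ,
    (toRootWeightData.Admissible Δ Y ↔ ∃ l ∈ Λ, supp Δ (lam0 Δ - l) = Y)

namespace RootWeightSystem

variable {A : Type*} [NormedAddCommGroup A] [NormedSpace ℝ A] [FiniteDimensional ℝ A]
variable (S : RootWeightSystem A)

/-- The face `F_Y^Δ` of the apartment `A` associated to a basis `Δ` and an admissible
subset `Y ⊆ Δ`. -/
def Face (Δ Y : Finset (Module.Dual ℝ A)) : Set A :=
  {x | (∀ a ∈ Y, a x = 0) ∧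
    ∀ l ∈ S.Λ, ¬ supp Δ (S.lam0 Δ - l) ⊆ Y → 0 < (S.lam0 Δ - l) x}

/-- `F` belongs to the collection `Σ` of faces. -/
def IsFace (F : Set A) : Prop :=
  ∃ Δ Y, S.toRootWeightData.IsBase Δ ∧ S.toRootWeightData.Admissible Δ Y ∧
    F = S.Face Δ Y

/-- The collection `Σ` of all faces. -/
def Faces : Type _ := {F : Set A // S.IsFace F}

/-- The relation identifying `(F, u)` and `(F, v)` when `u - v ∈ ⟨F⟩`; the quotient is
the disjoint union `Ā = ⊔_{F ∈ Σ} A/⟨F⟩`. -/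
def AbarRel (p q : S.Faces × A) : Prop :=
  p.1 = q.1 ∧ p.2 - q.2 ∈ Submodule.span ℝ p.1.val

/-- The compactified apartment `Ā = ⊔_{F ∈ Σ} A_F`, `A_F = A/⟨F⟩`. -/
def Abar : Type _ := Quot S.AbarRel

/-- `r_F(u)`, the image of `u ∈ A` in the stratum `A_F` of `Ā`. -/
def mkAbar (F : S.Faces) (u : A) : S.Abar := Quot.mk _ (F, u)

/-- The basic set `Γ_F(U) = ⋃_{F' ⊆ cl F} r_{F'}(U + F)` of `Ā`. -/
def Gamma (F : S.Faces) (U : Set A) : Set S.Abar :=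
  {p | ∃ F' : S.Faces, F'.val ⊆ closure F.val ∧ ∃ u ∈ U + F.val, p = S.mkAbar F' u}

/-- The topology of `Ā`, generated by the sets `Γ_F(U)` for `F ∈ Σ` and `U ⊆ A`
bounded and open. -/
instance : TopologicalSpace S.Abar :=
  TopologicalSpace.generateFrom
    {V : Set S.Abar | ∃ (F : S.Faces) (U : Set A),
      IsOpen U ∧ IsBounded U ∧ V = S.Gamma F U}

/-- `f_Ω(a) = inf {t : Ω ⊆ cl_Ā {z ∈ A : a(z) ≥ -t}} ∈ ℝ ∪ {±∞}`, where `A` is embedded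
in `Ā` as the stratum of the face `F₀ = {0}`. -/
def fOmega (F₀ : S.Faces) (Ω : Set S.Abar) (a : Module.Dual ℝ A) : EReal :=
  sInf ((fun t : ℝ => (t : EReal)) ''
    {t : ℝ | Ω ⊆ closure (S.mkAbar F₀ '' {z : A | -t ≤ a z})})

end RootWeightSystem


variable {A : Type*} [NormedAddCommGroup A] [NormedSpace ℝ A] [FiniteDimensional ℝ A]

/-!
Over a basis `Δ`, the condition `[λ₀(Δ) - λ] ⊄ Y` says exactly that `λ₀(Δ) - λ ∉ ⟨Y⟩`, so
`F_Y^Δ` is the set of `x ∈ ⟨Y⟩^⊥` at which `λ₀(Δ) - λ > 0` for every weight `λ` with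
`λ₀(Δ) - λ ∉ ⟨Y⟩`; this depends only on `⟨Y⟩` and on `λ₀(Δ)` modulo `⟨Y⟩`. Conversely, the
face is a nonempty open subset of `⟨Y⟩^⊥` (a point with `a = 0` on `Y` and `a = 1` on `Δ \ Y`
lies in it), so `⟨Y⟩` is recovered as the space of linear forms constant on the face. If
`λ₀(Δ) - λ₀(Δ') ∉ ⟨Y⟩ = ⟨Y'⟩`, both `λ₀(Δ) - λ₀(Δ')` and `λ₀(Δ') - λ₀(Δ)` would be positive
on the common face.
-/

section Coeffs

variable {V : Type*} [AddCommGroup V] [Module ℝ V] {Δ Y : Finset (Module.Dual ℝ V)}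
  {μ : Module.Dual ℝ V}

lemma eq_sum_coeffs (h : ∃ n : Module.Dual ℝ V → ℝ, μ = ∑ b ∈ Δ, n b • b) :
    μ = ∑ b ∈ Δ, coeffs Δ μ b • b := by
  rw [coeffs, dif_pos h]
  exact h.choose_spec

lemma coeffs_eq_of_linearIndependent
    (hli : LinearIndependent ℝ (fun a : (Δ : Set (Module.Dual ℝ V)) => (a : Module.Dual ℝ V)))
    {n : Module.Dual ℝ V → ℝ} (h : μ = ∑ b ∈ Δ, n b • b) {b : Module.Dual ℝ V} (hb : b ∈ Δ) :
    coeffs Δ μ b = n b := by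
  have hli' : LinearIndepOn ℝ id (Δ : Set (Module.Dual ℝ V)) := hli
  exact linearIndepOn_finset_iffₛ.mp hli' _ _ ((eq_sum_coeffs ⟨n, h⟩).symm.trans h) b hb

lemma supp_subset_iff_mem_span
    (hli : LinearIndependent ℝ (fun a : (Δ : Set (Module.Dual ℝ V)) => (a : Module.Dual ℝ V)))
    (hYΔ : Y ⊆ Δ) (h : ∃ n : Module.Dual ℝ V → ℝ, μ = ∑ b ∈ Δ, n b • b) :
    supp Δ μ ⊆ Y ↔ μ ∈ Submodule.span ℝ (Y : Set (Module.Dual ℝ V)) := by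
  constructor
  · intro hs
    rw [eq_sum_coeffs h]
    refine Submodule.sum_mem _ fun b hb => ?_
    by_cases hc : coeffs Δ μ b = 0
    · simp [hc]
    · exact Submodule.smul_mem _ _ (Submodule.subset_span (hs (Finset.mem_filter.mpr ⟨hb, hc⟩)))
  · intro hμ b hb
    obtain ⟨m, -, hm⟩ := Submodule.mem_span_finset.mp hμ
    have hrep : μ = ∑ b ∈ Δ, (if b ∈ Y then m b else 0) • b := by
      simp only [ite_smul, zero_smul]
      rw [Finset.sum_ite_mem, Finset.inter_eq_right.mpr hYΔ, hm]
    obtain ⟨hbΔ, hbc⟩ := Finset.mem_filter.mp hb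
    rw [coeffs_eq_of_linearIndependent hli hrep hbΔ] at hbc
    by_contra hbY
    simp [hbY] at hbc

end Coeffs

lemma exists_forall_apply_eq {K V : Type*} [Field K] [AddCommGroup V] [Module K V]
    [FiniteDimensional K V] {Δ : Set (Module.Dual K V)} (hli : LinearIndepOn K id Δ)
    (c : Module.Dual K V → K) : ∃ x : V, ∀ a ∈ Δ, a x = c a := by
  let b := Module.Basis.extend hli
  refine ⟨(Module.evalEquiv K V).symm (b.constr K fun i => c i), fun a ha => ?_⟩
  have hmem : a ∈ hli.extend (Set.subset_univ _) := hli.subset_extend _ ha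
  rw [Module.apply_evalEquiv_symm_apply]
  simpa [b, Module.Basis.extend_apply_self] using b.constr_basis K (fun i => c i) ⟨a, hmem⟩

namespace RootWeightSystem

variable (S : RootWeightSystem A) {Δ Y : Finset (Module.Dual ℝ A)}

lemma supp_lam0_sub_subset_iff (hΔ : S.IsBase Δ) (hYΔ : Y ⊆ Δ) {l : Module.Dual ℝ A}
    (hl : l ∈ S.Λ) :
    supp Δ (S.lam0 Δ - l) ⊆ Y ↔ S.lam0 Δ - l ∈ Submodule.span ℝ (Y : Set (Module.Dual ℝ A)) :=
  let ⟨n, _, hn⟩ := S.lam0_dominates Δ hΔ l hl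
  supp_subset_iff_mem_span hΔ.2.1 hYΔ ⟨n, hn⟩

lemma mem_face_iff (hΔ : S.IsBase Δ) (hYΔ : Y ⊆ Δ) {x : A} :
    x ∈ S.Face Δ Y ↔
      x ∈ (Submodule.span ℝ (Y : Set (Module.Dual ℝ A))).dualCoannihilator ∧
        ∀ l ∈ S.Λ, S.lam0 Δ - l ∉ Submodule.span ℝ (Y : Set (Module.Dual ℝ A)) →
          0 < (S.lam0 Δ - l) x := by
  rw [← SetLike.mem_coe, Submodule.coe_dualCoannihilator_span]
  refine and_congr Iff.rfl (forall₂_congr fun l hl => ?_)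
  rw [S.supp_lam0_sub_subset_iff hΔ hYΔ hl]

lemma exists_mem_face (hΔ : S.IsBase Δ) (hYΔ : Y ⊆ Δ) : ∃ x, x ∈ S.Face Δ Y := by
  obtain ⟨x, hx⟩ := exists_forall_apply_eq hΔ.2.1 fun a => if a ∈ Y then (0 : ℝ) else 1
  refine ⟨x, fun a ha => by simpa [ha] using hx a (hYΔ ha), fun l hl hns => ?_⟩
  obtain ⟨n, hn0, hn⟩ := S.lam0_dominates Δ hΔ l hl
  obtain ⟨b₀, hb₀, hb₀Y⟩ := Finset.not_subset.mp hns
  obtain ⟨hb₀Δ, hb₀n⟩ := Finset.mem_filter.mp hb₀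
  rw [coeffs_eq_of_linearIndependent hΔ.2.1 hn hb₀Δ] at hb₀n
  have hval : (S.lam0 Δ - l) x = ∑ b ∈ Δ, n b * if b ∈ Y then 0 else 1 := by
    rw [hn, LinearMap.sum_apply]
    exact Finset.sum_congr rfl fun b hb => by rw [LinearMap.smul_apply, hx b hb, smul_eq_mul]
  rw [hval]
  refine Finset.sum_pos' (fun b hb => ?_) ⟨b₀, hb₀Δ, ?_⟩
  · split_ifs <;> simp [hn0 b hb]
  · simpa [hb₀Y] using (hn0 b₀ hb₀Δ).lt_of_ne' hb₀n

lemma eventually_add_smul_mem_face {x v : A} (hx : x ∈ S.Face Δ Y) (hv : ∀ a ∈ Y, a v = 0) :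
    ∀ᶠ t : ℝ in 𝓝 0, x + t • v ∈ S.Face Δ Y := by
  have hpos : ∀ l ∈ S.Λ, ∀ᶠ t : ℝ in 𝓝 0,
      ¬ supp Δ (S.lam0 Δ - l) ⊆ Y → 0 < (S.lam0 Δ - l) (x + t • v) := by
    intro l hl
    by_cases hns : supp Δ (S.lam0 Δ - l) ⊆ Y
    · exact Filter.Eventually.of_forall fun _ h => absurd hns h
    have hcont : Continuous fun t : ℝ => (S.lam0 Δ - l) x + t * (S.lam0 Δ - l) v := by fun_prop
    have hlim := hcont.tendsto' 0 ((S.lam0 Δ - l) x) (by simp)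
    filter_upwards [hlim.eventually_const_lt (hx.2 l hl hns)] with t ht _
    rwa [map_add, map_smul, smul_eq_mul]
  filter_upwards [(Filter.eventually_all_finset S.Λ).mpr hpos] with t ht
  exact ⟨fun a ha => by simp [hx.1 a ha, hv a ha], ht⟩

lemma mem_span_iff_apply_eq_on_face (hΔ : S.IsBase Δ) (hYΔ : Y ⊆ Δ) (μ : Module.Dual ℝ A) :
    μ ∈ Submodule.span ℝ (Y : Set (Module.Dual ℝ A)) ↔
      ∀ x ∈ S.Face Δ Y, ∀ y ∈ S.Face Δ Y, μ x = μ y := by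
  constructor
  · intro hμ x hx y hy
    have hxy := (Submodule.mem_dualCoannihilator (x - y)).mp
      (sub_mem ((S.mem_face_iff hΔ hYΔ).mp hx).1 ((S.mem_face_iff hΔ hYΔ).mp hy).1) μ hμ
    rwa [map_sub, sub_eq_zero] at hxy
  · intro hconst
    obtain ⟨x, hx⟩ := S.exists_mem_face hΔ hYΔ
    rw [← Subspace.dualCoannihilator_dualAnnihilator_eq (W := Submodule.span ℝ _),
      Submodule.mem_dualAnnihilator]
    intro v hv
    rw [← SetLike.mem_coe, Submodule.coe_dualCoannihilator_span] at hv
    obtain ⟨t, hmem, ht⟩ := ((S.eventually_add_smul_mem_face hx hv).filter_mono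
      nhdsWithin_le_nhds |>.and self_mem_nhdsWithin).exists (f := 𝓝[≠] (0 : ℝ))
    have h := hconst _ hmem x hx
    rw [map_add, map_smul, smul_eq_mul, add_eq_left] at h
    exact (mul_eq_zero.mp h).resolve_left ht

lemma face_subset_face {Δ' Y' : Finset (Module.Dual ℝ A)} (hΔ : S.IsBase Δ)
    (hΔ' : S.IsBase Δ') (hYΔ : Y ⊆ Δ) (hYΔ' : Y' ⊆ Δ')
    (hspan : Submodule.span ℝ (Y : Set (Module.Dual ℝ A)) =
      Submodule.span ℝ (Y' : Set (Module.Dual ℝ A)))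
    (hmem : S.lam0 Δ - S.lam0 Δ' ∈ Submodule.span ℝ (Y : Set (Module.Dual ℝ A))) :
    S.Face Δ' Y' ⊆ S.Face Δ Y := by
  intro x hx
  rw [S.mem_face_iff hΔ' hYΔ', ← hspan] at hx
  refine (S.mem_face_iff hΔ hYΔ).mpr ⟨hx.1, fun l hl hns => ?_⟩
  have hsplit : S.lam0 Δ - l = (S.lam0 Δ - S.lam0 Δ') + (S.lam0 Δ' - l) := by abel
  have hns' : S.lam0 Δ' - l ∉ Submodule.span ℝ (Y : Set (Module.Dual ℝ A)) := fun h =>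
    hns (hsplit ▸ add_mem hmem h)
  have hzero := (Submodule.mem_dualCoannihilator x).mp hx.1 _ hmem
  rw [hsplit, LinearMap.add_apply, hzero, zero_add]
  exact hx.2 l hl hns'

lemma lam0_sub_mem_span_of_face_eq {Δ' Y' : Finset (Module.Dual ℝ A)} (hΔ : S.IsBase Δ)
    (hΔ' : S.IsBase Δ') (hYΔ : Y ⊆ Δ) (hYΔ' : Y' ⊆ Δ') (hF : S.Face Δ Y = S.Face Δ' Y')
    (hspan : Submodule.span ℝ (Y : Set (Module.Dual ℝ A)) =
      Submodule.span ℝ (Y' : Set (Module.Dual ℝ A))) :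
    S.lam0 Δ - S.lam0 Δ' ∈ Submodule.span ℝ (Y : Set (Module.Dual ℝ A)) := by
  by_contra hmem
  obtain ⟨x, hx⟩ := S.exists_mem_face hΔ hYΔ
  have hx' := (S.mem_face_iff hΔ' hYΔ').mp (hF ▸ hx)
  rw [← hspan] at hx'
  have hneg : S.lam0 Δ' - S.lam0 Δ ∉ Submodule.span ℝ (Y : Set (Module.Dual ℝ A)) := by
    rwa [← neg_sub, neg_mem_iff]
  have h₁ := ((S.mem_face_iff hΔ hYΔ).mp hx).2 _ (S.lam0_mem Δ' hΔ') hmem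
  have h₂ := hx'.2 _ (S.lam0_mem Δ hΔ) hneg
  simp only [LinearMap.sub_apply] at h₁ h₂
  linarith

end RootWeightSystem

/-- For bases `Δ`, `Δ'` of `Φ` and admissible subsets `Y ⊆ Δ`,
`Y' ⊆ Δ'`, one has `F_Y^Δ = F_{Y'}^{Δ'}` iff `⟨Y⟩ = ⟨Y'⟩` and
`λ₀(Δ) - λ₀(Δ') ∈ ⟨Y⟩`. -/
theorem face_eq_iff (S : RootWeightSystem A)
    (Δ Δ' Y Y' : Finset (Module.Dual ℝ A))
    (hΔ : S.toRootWeightData.IsBase Δ) (hΔ' : S.toRootWeightData.IsBase Δ')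
    (hY : S.toRootWeightData.Admissible Δ Y)
    (hY' : S.toRootWeightData.Admissible Δ' Y') :
    S.Face Δ Y = S.Face Δ' Y' ↔
      (Submodule.span ℝ ((Y : Set (Module.Dual ℝ A))) =
          Submodule.span ℝ ((Y' : Set (Module.Dual ℝ A))) ∧
        S.lam0 Δ - S.lam0 Δ' ∈ Submodule.span ℝ ((Y : Set (Module.Dual ℝ A)))) := by
  constructor
  · intro hF
    have hspan : Submodule.span ℝ (Y : Set (Module.Dual ℝ A)) =
        Submodule.span ℝ (Y' : Set (Module.Dual ℝ A)) := by
      ext μ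
      rw [S.mem_span_iff_apply_eq_on_face hΔ hY.1, hF,
        S.mem_span_iff_apply_eq_on_face hΔ' hY'.1]
    exact ⟨hspan, S.lam0_sub_mem_span_of_face_eq hΔ hΔ' hY.1 hY'.1 hF hspan⟩
  · rintro ⟨hspan, hmem⟩
    have hmem' : S.lam0 Δ' - S.lam0 Δ ∈ Submodule.span ℝ (Y' : Set (Module.Dual ℝ A)) := by
      rw [← hspan, ← neg_sub]
      exact neg_mem hmem
    exact (S.face_subset_face hΔ' hΔ hY'.1 hY.1 hspan.symm hmem').antisymm
      (S.face_subset_face hΔ hΔ' hY.1 hY'.1 hspan hmem)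
end
end

section
/- For every basis Δ of Φ and admissible Y ⊆ Δ, the closure of F_Y^Δ in A equals {x ∈ A : a(x) = 0 for all a ∈ Y and (λ₀(Δ) − λ)(x) ≥ 0 for all λ ∈ Λ}. -/
/-!
Common setup for Werner, "Compactifications of Bruhat-Tits buildings associated to
linear representations":  a finite-dimensional real vector space `A` (the apartment),
a root system `Φ` in the dual space together with a Weyl-group invariant inner
product, a finite Weyl-invariant set `Λ` of (K-)weights, and for every basis `Δ`
of `Φ` a highest weight `lam0 Δ ∈ Λ`.
-/

open Pointwise Filter Topology Bornology
open scoped Classical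

noncomputable section

variable {A : Type*} [NormedAddCommGroup A] [NormedSpace ℝ A] [FiniteDimensional ℝ A]

/-!
The closed set `C = {x | a(x) = 0 (a ∈ Y), (λ₀ - λ)(x) ≥ 0 (λ ∈ Λ)}` contains the face: if the
support of `λ₀ - λ = ∑ nₐ a` lies in `Y`, then `(λ₀ - λ)(x) = 0` on `{a(x) = 0, a ∈ Y}`. Conversely
the face contains a point `x₀` with `a(x₀) = 0` for `a ∈ Y` and `a(x₀) = 1` for `a ∈ Δ \ Y`
(`Δ` is linearly independent); since all `nₐ ≥ 0`, the open segment from `x₀` to any `x ∈ C` lies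
in the face, so `x` lies in its closure.
-/

theorem Module.exists_dual_forall_apply_eq {K V : Type*} [Field K] [AddCommGroup V]
    [Module K V] {s : Set V} (hs : LinearIndepOn K id s) (c : V → K) :
    ∃ f : Module.Dual K V, ∀ v ∈ s, f v = c v := by
  let b := Module.Basis.extend hs
  refine ⟨b.constr K fun i => c i, fun v hv => ?_⟩
  have hv' : v ∈ hs.extend (Set.subset_univ s) := hs.subset_extend _ hv
  simpa [b, Module.Basis.extend_apply_self] using b.constr_basis K (fun i => c i) ⟨v, hv'⟩

theorem Module.exists_forall_apply_eq_of_linearIndepOn {E : Type*} [AddCommGroup E] [Module ℝ E]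
    [FiniteDimensional ℝ E] {s : Set (Module.Dual ℝ E)} (hs : LinearIndepOn ℝ id s)
    (c : Module.Dual ℝ E → ℝ) : ∃ x : E, ∀ a ∈ s, a x = c a := by
  obtain ⟨f, hf⟩ := Module.exists_dual_forall_apply_eq hs c
  exact ⟨(Module.evalEquiv ℝ E).symm f, fun a ha => by
    rw [Module.apply_evalEquiv_symm_apply, hf a ha]⟩

theorem subset_closure_of_forall_openSegment_subset {E : Type*} [AddCommGroup E] [Module ℝ E]
    [TopologicalSpace E] [ContinuousAdd E] [ContinuousSMul ℝ E] {s t : Set E} {x₀ : E}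
    (h : ∀ x ∈ t, openSegment ℝ x₀ x ⊆ s) : t ⊆ closure s := fun x hx =>
  segment_subset_closure_openSegment.trans (closure_mono (h x hx)) (right_mem_segment ℝ x₀ x)

section Coeffs

variable {E : Type*} [AddCommGroup E] [Module ℝ E] {Δ Y : Finset (Module.Dual ℝ E)}
  {μ : Module.Dual ℝ E}

theorem sum_coeffs_smul (h : ∃ n : Module.Dual ℝ E → ℝ, μ = ∑ b ∈ Δ, n b • b) :
    ∑ b ∈ Δ, coeffs Δ μ b • b = μ := by
  rw [coeffs, dif_pos h]
  exact h.choose_spec.symm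

theorem coeffs_eq_of_eq_sum (hΔ : LinearIndepOn ℝ id (Δ : Set (Module.Dual ℝ E)))
    {n : Module.Dual ℝ E → ℝ} (hn : μ = ∑ b ∈ Δ, n b • b) {a : Module.Dual ℝ E}
    (ha : a ∈ Δ) : coeffs Δ μ a = n a :=
  linearIndepOn_finset_iffₛ.mp hΔ _ _ ((sum_coeffs_smul ⟨n, hn⟩).trans hn) a ha

theorem apply_eq_sum_coeffs_mul (hμ : ∑ b ∈ Δ, coeffs Δ μ b • b = μ) (x : E) :
    μ x = ∑ b ∈ Δ, coeffs Δ μ b * b x := by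
  conv_lhs => rw [← hμ]
  simp only [LinearMap.coe_sum, Finset.sum_apply, LinearMap.smul_apply, smul_eq_mul]

theorem apply_eq_zero_of_supp_subset (hμ : ∑ b ∈ Δ, coeffs Δ μ b • b = μ)
    (hY : supp Δ μ ⊆ Y) {x : E} (hx : ∀ a ∈ Y, a x = 0) : μ x = 0 := by
  rw [apply_eq_sum_coeffs_mul hμ]
  refine Finset.sum_eq_zero fun a ha => ?_
  by_cases hc : coeffs Δ μ a = 0
  · rw [hc, zero_mul]
  · rw [hx a (hY (Finset.mem_filter.mpr ⟨ha, hc⟩)), mul_zero]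

theorem apply_pos_of_not_supp_subset (hμ : ∑ b ∈ Δ, coeffs Δ μ b • b = μ)
    (hnn : ∀ a ∈ Δ, 0 ≤ coeffs Δ μ a) (hY : ¬supp Δ μ ⊆ Y) {x : E}
    (hx : ∀ a ∈ Δ, 0 ≤ a x) (hxY : ∀ a ∈ Δ, a ∉ Y → 0 < a x) : 0 < μ x := by
  obtain ⟨a, haμ, haY⟩ := Finset.not_subset.mp hY
  obtain ⟨haΔ, hca⟩ := Finset.mem_filter.mp haμ
  rw [apply_eq_sum_coeffs_mul hμ]
  exact Finset.sum_pos' (fun b hb => mul_nonneg (hnn b hb) (hx b hb))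
    ⟨a, haΔ, mul_pos ((hnn a haΔ).lt_of_ne' hca) (hxY a haΔ haY)⟩

end Coeffs

namespace RootWeightSystem

variable (S : RootWeightSystem A) {Δ Y : Finset (Module.Dual ℝ A)}

def closedFace (Δ Y : Finset (Module.Dual ℝ A)) : Set A :=
  {x | (∀ a ∈ Y, a x = 0) ∧ ∀ l ∈ S.Λ, 0 ≤ (S.lam0 Δ - l) x}

variable {S}

theorem sum_coeffs_lam0_sub (hΔ : S.IsBase Δ) {l : Module.Dual ℝ A} (hl : l ∈ S.Λ) :
    ∑ b ∈ Δ, coeffs Δ (S.lam0 Δ - l) b • b = S.lam0 Δ - l :=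
  sum_coeffs_smul ((S.lam0_dominates Δ hΔ l hl).imp fun _ h => h.2)

theorem coeffs_lam0_sub_nonneg (hΔ : S.IsBase Δ) {l : Module.Dual ℝ A} (hl : l ∈ S.Λ)
    {a : Module.Dual ℝ A} (ha : a ∈ Δ) : 0 ≤ coeffs Δ (S.lam0 Δ - l) a := by
  obtain ⟨n, hn, hsum⟩ := S.lam0_dominates Δ hΔ l hl
  rw [coeffs_eq_of_eq_sum hΔ.2.1 hsum ha]
  exact hn a ha

theorem face_subset_closedFace (hΔ : S.IsBase Δ) : S.Face Δ Y ⊆ S.closedFace Δ Y := by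
  rintro x ⟨hxY, hxpos⟩
  refine ⟨hxY, fun l hl => ?_⟩
  by_cases hsupp : supp Δ (S.lam0 Δ - l) ⊆ Y
  · exact (apply_eq_zero_of_supp_subset (sum_coeffs_lam0_sub hΔ hl) hsupp hxY).ge
  · exact (hxpos l hl hsupp).le

theorem isClosed_closedFace : IsClosed (S.closedFace Δ Y) := by
  simp only [closedFace, Set.ofPred_and, Set.ofPred_forall]
  exact (isClosed_biInter fun a _ =>
      isClosed_eq a.continuous_of_finiteDimensional continuous_const).inter
    (isClosed_biInter fun l _ =>
      isClosed_le continuous_const (S.lam0 Δ - l).continuous_of_finiteDimensional)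

theorem face_nonempty (hΔ : S.IsBase Δ) (hYΔ : Y ⊆ Δ) : (S.Face Δ Y).Nonempty := by
  obtain ⟨x₀, hx₀⟩ :=
    Module.exists_forall_apply_eq_of_linearIndepOn hΔ.2.1 fun a => if a ∈ Y then 0 else 1
  refine ⟨x₀, fun a ha => by rw [hx₀ a (hYΔ ha), if_pos ha], fun l hl hsupp => ?_⟩
  refine apply_pos_of_not_supp_subset (sum_coeffs_lam0_sub hΔ hl)
    (fun a ha => coeffs_lam0_sub_nonneg hΔ hl ha) hsupp (fun a ha => ?_) fun a ha haY => ?_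
  · rw [hx₀ a ha]
    split_ifs <;> norm_num
  · rw [hx₀ a ha, if_neg haY]
    exact one_pos

theorem openSegment_subset_face {x₀ x : A} (hx₀ : x₀ ∈ S.Face Δ Y)
    (hx : x ∈ S.closedFace Δ Y) : openSegment ℝ x₀ x ⊆ S.Face Δ Y := by
  rintro _ ⟨s, t, hs, ht, -, rfl⟩
  refine ⟨fun a ha => ?_, fun l hl hsupp => ?_⟩
  · simp [hx₀.1 a ha, hx.1 a ha]
  · rw [map_add, map_smul, map_smul, smul_eq_mul, smul_eq_mul]
    exact add_pos_of_pos_of_nonneg (mul_pos hs (hx₀.2 l hl hsupp)) (mul_nonneg ht.le (hx.2 l hl))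

end RootWeightSystem

/-- The closure of `F_Y^Δ` in `A` is
`{x ∈ A : a(x) = 0 ∀ a ∈ Y, (λ₀(Δ) - λ)(x) ≥ 0 ∀ λ ∈ Λ}`. -/
theorem closure_face_eq (S : RootWeightSystem A)
    (Δ Y : Finset (Module.Dual ℝ A))
    (hΔ : S.toRootWeightData.IsBase Δ) (hY : S.toRootWeightData.Admissible Δ Y) :
    closure (S.Face Δ Y) =
      {x : A | (∀ a ∈ Y, a x = 0) ∧ ∀ l ∈ S.Λ, 0 ≤ (S.lam0 Δ - l) x} := by
  obtain ⟨x₀, hx₀⟩ := S.face_nonempty hΔ hY.1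
  refine (closure_minimal (S.face_subset_closedFace hΔ) S.isClosed_closedFace).antisymm ?_
  exact subset_closure_of_forall_openSegment_subset fun x hx => S.openSegment_subset_face hx₀ hx
end
end

section
/- The sets Γ_F(U), where F ranges over the faces in Σ and U over the bounded open subsets of A, form a basis of a topology on Ā: for any two such sets Γ_{F₁}(U₁), Γ_{F₂}(U₂) and any point z in their intersection there exist F ∈ Σ and a bounded open U ⊆ A with z ∈ Γ_F(U) ⊆ Γ_{F₁}(U₁) ∩ Γ_{F₂}(U₂), and the sets Γ_F(U) cover Ā. -/
/-!
Common setup for Werner, "Compactifications of Bruhat-Tits buildings associated to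
linear representations":  a finite-dimensional real vector space `A` (the apartment),
a root system `Φ` in the dual space together with a Weyl-group invariant inner
product, a finite Weyl-invariant set `Λ` of (K-)weights, and for every basis `Δ`
of `Φ` a highest weight `lam0 Δ ∈ Λ`.
-/

open Pointwise Filter Topology Bornology
open scoped Classical

noncomputable section

variable {A : Type*} [NormedAddCommGroup A] [NormedSpace ℝ A] [FiniteDimensional ℝ A]

section Aux

/-- Uniqueness of coefficients for a linearly independent finite family. -/
lemma linIndep_coeff_unique (Δ : Finset (Module.Dual ℝ A))
    (hli : LinearIndependent ℝ (fun a : (Δ : Set (Module.Dual ℝ A)) => (a : Module.Dual ℝ A)))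
    (m : Module.Dual ℝ A → ℝ) (hm : ∑ b ∈ Δ, m b • b = 0) : ∀ b ∈ Δ, m b = 0 := by
  have h := Fintype.linearIndependent_iff.mp hli (fun i => m i.val)
  have hsum : ∑ i : ↥(Δ : Set (Module.Dual ℝ A)), m i.val • (i.val : Module.Dual ℝ A) = 0 := by
    rw [Finset.sum_finset_coe (f := fun b => m b • b)]
    exact hm
  intro b hb
  exact h hsum ⟨b, hb⟩

/-- A linearly independent finite family of functionals can take arbitrary values. -/
lemma exists_dual_eval (Δ : Finset (Module.Dual ℝ A))
    (hli : LinearIndependent ℝ (fun a : (Δ : Set (Module.Dual ℝ A)) => (a : Module.Dual ℝ A)))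
    (c : Module.Dual ℝ A → ℝ) : ∃ x : A, ∀ a ∈ Δ, a x = c a := by
  classical
  let T : A →ₗ[ℝ] (↥(Δ : Set (Module.Dual ℝ A)) → ℝ) :=
    LinearMap.pi fun i => (i : Module.Dual ℝ A)
  have hsurj : LinearMap.range T = ⊤ := by
    by_contra hne
    obtain ⟨f, hf0, hfb⟩ :=
      Submodule.exists_dual_map_eq_bot_of_lt_top (lt_top_iff_ne_top.mpr hne) inferInstance
    have hker : ∀ x : A, f (T x) = 0 := by
      intro x
      have hmem : f (T x) ∈ Submodule.map f (LinearMap.range T) :=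
        Submodule.mem_map_of_mem (LinearMap.mem_range_self T x)
      rw [hfb] at hmem
      simpa using hmem
    have hz : ∀ i : ↥(Δ : Set (Module.Dual ℝ A)), f (fun j => if i = j then (1:ℝ) else 0) = 0 := by
      apply Fintype.linearIndependent_iff.mp hli (fun i => f (fun j => if i = j then (1:ℝ) else 0))
      refine LinearMap.ext fun x => ?_
      have h1 := LinearMap.pi_apply_eq_sum_univ f (T x)
      rw [hker x] at h1
      simp only [LinearMap.coe_sum, Finset.sum_apply, LinearMap.smul_apply, smul_eq_mul,
        LinearMap.zero_apply]
      calc ∑ i : ↥(Δ : Set (Module.Dual ℝ A)), f (fun j => if i = j then (1:ℝ) else 0) * (i : Module.Dual ℝ A) x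
          = ∑ i : ↥(Δ : Set (Module.Dual ℝ A)), (T x) i • f (fun j => if i = j then (1:ℝ) else 0) := by
            refine Finset.sum_congr rfl fun i _ => ?_
            simp only [T, LinearMap.pi_apply, smul_eq_mul]
            ring
        _ = 0 := h1.symm
    apply hf0
    refine LinearMap.ext fun y => ?_
    rw [LinearMap.pi_apply_eq_sum_univ f y]
    refine Finset.sum_eq_zero fun i _ => ?_
    rw [hz i, smul_zero]
  have hsurj' : Function.Surjective T := LinearMap.range_eq_top.mp hsurj
  obtain ⟨x, hx⟩ := hsurj' (fun i : ↥(Δ : Set (Module.Dual ℝ A)) => c i.val)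
  refine ⟨x, fun a ha => ?_⟩
  have := congrFun hx ⟨a, Finset.mem_coe.mpr ha⟩
  simpa only [T, LinearMap.pi_apply] using this

variable (S : RootWeightSystem A)

/-- The coefficients of `λ₀(Δ) - l` are well defined and nonnegative. -/
lemma coeffs_spec {Δ : Finset (Module.Dual ℝ A)}
    (hb : S.toRootWeightData.IsBase Δ) {l : Module.Dual ℝ A} (hl : l ∈ S.Λ) :
    S.lam0 Δ - l = ∑ b ∈ Δ, coeffs Δ (S.lam0 Δ - l) b • b ∧
    ∀ b ∈ Δ, 0 ≤ coeffs Δ (S.lam0 Δ - l) b := by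
  obtain ⟨n, hn0, hn⟩ := S.lam0_dominates Δ hb l hl
  have hex : ∃ m : Module.Dual ℝ A → ℝ, S.lam0 Δ - l = ∑ b ∈ Δ, m b • b := ⟨n, hn⟩
  have hco : coeffs Δ (S.lam0 Δ - l) = hex.choose := by rw [coeffs, dif_pos hex]
  have hrep : S.lam0 Δ - l = ∑ b ∈ Δ, coeffs Δ (S.lam0 Δ - l) b • b := by
    rw [hco]; exact hex.choose_spec
  refine ⟨hrep, fun b hb' => ?_⟩
  have hzero : ∑ b ∈ Δ, (coeffs Δ (S.lam0 Δ - l) b - n b) • b = 0 := by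
    have hsplit : ∀ b ∈ Δ, (coeffs Δ (S.lam0 Δ - l) b - n b) • b
        = coeffs Δ (S.lam0 Δ - l) b • b - n b • b := fun b _ => by
      ext x
      simp [LinearMap.sub_apply, LinearMap.smul_apply, smul_eq_mul, sub_mul]
    rw [Finset.sum_congr rfl hsplit, Finset.sum_sub_distrib, ← hrep, ← hn, sub_self]
  have heq := linIndep_coeff_unique Δ hb.2.1 _ hzero b hb'
  have := hn0 b hb'
  linarith

/-- Every face is nonempty. -/
lemma isFace_nonempty {F : Set A} (h : S.IsFace F) : F.Nonempty := by
  obtain ⟨Δ, Y, hb, hadm, rfl⟩ := h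
  obtain ⟨x, hx⟩ := exists_dual_eval Δ hb.2.1 (fun a => if a ∈ Y then 0 else 1)
  refine ⟨x, ⟨fun a ha => ?_, fun l hl hs => ?_⟩⟩
  · rw [hx a (hadm.1 ha), if_pos ha]
  · obtain ⟨hrep, hpos⟩ := coeffs_spec S hb hl
    obtain ⟨a₀, ha₀s, ha₀Y⟩ := Finset.not_subset.mp hs
    have ha₀Δ : a₀ ∈ Δ := (Finset.mem_filter.mp ha₀s).1
    have ha₀c : coeffs Δ (S.lam0 Δ - l) a₀ ≠ 0 := (Finset.mem_filter.mp ha₀s).2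
    have hval : (S.lam0 Δ - l) x = ∑ b ∈ Δ, coeffs Δ (S.lam0 Δ - l) b * (b x) := by
      conv_lhs => rw [hrep]
      simp only [LinearMap.coe_sum, Finset.sum_apply, LinearMap.smul_apply, smul_eq_mul]
    rw [hval]
    apply Finset.sum_pos'
    · intro b hbΔ
      by_cases hbY : b ∈ Y
      · rw [hx b hbΔ, if_pos hbY, mul_zero]
      · rw [hx b hbΔ, if_neg hbY, mul_one]; exact hpos b hbΔ
    · refine ⟨a₀, ha₀Δ, ?_⟩
      rw [hx a₀ ha₀Δ, if_neg ha₀Y, mul_one]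
      exact lt_of_le_of_ne (hpos a₀ ha₀Δ) (Ne.symm ha₀c)

/-- Points of the closure of a face satisfy the corresponding weak conditions. -/
lemma closure_face_subset (Δ Y : Finset (Module.Dual ℝ A)) :
    closure (S.Face Δ Y) ⊆ {v : A | (∀ a ∈ Y, a v = 0) ∧
      ∀ l ∈ S.Λ, ¬ supp Δ (S.lam0 Δ - l) ⊆ Y → 0 ≤ (S.lam0 Δ - l) v} := by
  apply closure_minimal
  · intro v hv
    exact ⟨hv.1, fun l hl h => (hv.2 l hl h).le⟩
  · rw [Set.setOf_and]
    apply IsClosed.inter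
    · rw [Set.setOf_forall]
      refine isClosed_iInter fun a => ?_
      by_cases ha : a ∈ Y
      · simp only [ha, true_implies]
        exact isClosed_eq (LinearMap.continuous_of_finiteDimensional a) continuous_const
      · have huniv : {v : A | a ∈ Y → a v = 0} = Set.univ := by
          ext v; simp only [Set.mem_setOf_eq, Set.mem_univ, iff_true]
          intro hc; exact absurd hc ha
        rw [huniv]; exact isClosed_univ
    · rw [Set.setOf_forall]
      refine isClosed_iInter fun l => ?_
      by_cases hl : l ∈ S.Λ
      · by_cases h2 : ¬ supp Δ (S.lam0 Δ - l) ⊆ Y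
        · simp only [hl, h2, not_false_eq_true, true_implies]
          exact isClosed_le continuous_const
            (LinearMap.continuous_of_finiteDimensional (S.lam0 Δ - l))
        · have huniv : {v : A | l ∈ S.Λ → ¬ supp Δ (S.lam0 Δ - l) ⊆ Y → 0 ≤ (S.lam0 Δ - l) v}
              = Set.univ := by
            ext v; simp only [Set.mem_setOf_eq, Set.mem_univ, iff_true]
            intro _ hc; exact absurd hc h2
          rw [huniv]; exact isClosed_univ
      · have huniv : {v : A | l ∈ S.Λ → ¬ supp Δ (S.lam0 Δ - l) ⊆ Y → 0 ≤ (S.lam0 Δ - l) v}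
            = Set.univ := by
          ext v; simp only [Set.mem_setOf_eq, Set.mem_univ, iff_true]
          intro hc; exact absurd hc hl
        rw [huniv]; exact isClosed_univ

/-- A face plus a point of its closure stays in the face. -/
lemma face_add_mem {Δ Y : Finset (Module.Dual ℝ A)} {x y : A}
    (hx : x ∈ S.Face Δ Y) (hy : y ∈ closure (S.Face Δ Y)) : x + y ∈ S.Face Δ Y := by
  obtain ⟨h1, h2⟩ := closure_face_subset S Δ Y hy
  refine ⟨fun a ha => ?_, fun l hl h => ?_⟩
  · rw [map_add, hx.1 a ha, h1 a ha, add_zero]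
  · rw [map_add]
    exact add_pos_of_pos_of_nonneg (hx.2 l hl h) (h2 l hl h)

lemma face_add_self {Δ Y : Finset (Module.Dual ℝ A)} {x y : A}
    (hx : x ∈ S.Face Δ Y) (hy : y ∈ S.Face Δ Y) : x + y ∈ S.Face Δ Y :=
  face_add_mem S hx (subset_closure hy)

lemma face_smul {Δ Y : Finset (Module.Dual ℝ A)} {c : ℝ} {x : A} (hc : 0 < c)
    (hx : x ∈ S.Face Δ Y) : c • x ∈ S.Face Δ Y := by
  refine ⟨fun a ha => ?_, fun l hl h => ?_⟩
  · rw [map_smul, hx.1 a ha, smul_zero]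
  · rw [map_smul, smul_eq_mul]
    exact mul_pos hc (hx.2 l hl h)

lemma face_or_zero_add {Δ Y : Finset (Module.Dual ℝ A)} {x y : A}
    (hx : x ∈ S.Face Δ Y ∨ x = 0) (hy : y ∈ S.Face Δ Y ∨ y = 0) :
    x + y ∈ S.Face Δ Y ∨ x + y = 0 := by
  rcases hx with hx | rfl
  · rcases hy with hy | rfl
    · exact Or.inl (face_add_self S hx hy)
    · rw [add_zero]; exact Or.inl hx
  · rcases hy with hy | rfl
    · rw [zero_add]; exact Or.inl hy
    · rw [add_zero]; exact Or.inr rfl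

lemma face_or_zero_smul {Δ Y : Finset (Module.Dual ℝ A)} {c : ℝ} {x : A} (hc : 0 < c)
    (hx : x ∈ S.Face Δ Y ∨ x = 0) : c • x ∈ S.Face Δ Y ∨ c • x = 0 := by
  rcases hx with hx | rfl
  · exact Or.inl (face_smul S hc hx)
  · rw [smul_zero]; exact Or.inr rfl

/-- Every element of the span of a face is a difference of two elements of the
face (or zero). -/
lemma span_face_decomp {Δ Y : Finset (Module.Dual ℝ A)} {s : A}
    (hs : s ∈ Submodule.span ℝ (S.Face Δ Y)) :
    ∃ p q : A, (p ∈ S.Face Δ Y ∨ p = 0) ∧ (q ∈ S.Face Δ Y ∨ q = 0) ∧ s = p - q := by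
  induction hs using Submodule.span_induction with
  | mem x hx => exact ⟨x, 0, Or.inl hx, Or.inr rfl, (sub_zero x).symm⟩
  | zero => exact ⟨0, 0, Or.inr rfl, Or.inr rfl, (sub_zero 0).symm⟩
  | add x y hx hy ihx ihy =>
      obtain ⟨p1, q1, hp1, hq1, rfl⟩ := ihx
      obtain ⟨p2, q2, hp2, hq2, rfl⟩ := ihy
      exact ⟨p1 + p2, q1 + q2, face_or_zero_add S hp1 hp2, face_or_zero_add S hq1 hq2, by abel⟩
  | smul c x hx ih =>
      obtain ⟨p, q, hp, hq, rfl⟩ := ih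
      rcases lt_trichotomy c 0 with hc | rfl | hc
      · refine ⟨(-c) • q, (-c) • p, face_or_zero_smul S (neg_pos.mpr hc) hq,
          face_or_zero_smul S (neg_pos.mpr hc) hp, ?_⟩
        rw [smul_sub, neg_smul, neg_smul]; abel
      · exact ⟨0, 0, Or.inr rfl, Or.inr rfl, by rw [zero_smul, sub_zero]⟩
      · exact ⟨c • p, c • q, face_or_zero_smul S hc hp, face_or_zero_smul S hc hq,
          by rw [smul_sub]⟩

lemma abarRel_equivalence : Equivalence S.AbarRel := by
  constructor
  · intro p
    exact ⟨rfl, by simp⟩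
  · rintro p q ⟨h1, h2⟩
    refine ⟨h1.symm, ?_⟩
    rw [← h1]
    simpa using Submodule.neg_mem _ h2
  · rintro p q r ⟨h1, h2⟩ ⟨h3, h4⟩
    refine ⟨h1.trans h3, ?_⟩
    have heq : p.2 - r.2 = (p.2 - q.2) + (q.2 - r.2) := by abel
    rw [heq]
    exact Submodule.add_mem _ h2 (by rw [h1]; exact h4)

lemma mkAbar_eq_iff {F F' : S.Faces} {u u' : A} :
    S.mkAbar F u = S.mkAbar F' u' ↔ F = F' ∧ u - u' ∈ Submodule.span ℝ F.val := by
  constructor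
  · intro h
    exact (abarRel_equivalence S).eqvGen_iff.mp (Quot.eqvGen_exact h)
  · intro h
    exact Quot.sound h

end Aux

/-- The sets `Γ_F(U)`, for `F ∈ Σ` and `U ⊆ A` bounded open, form a
basis of a topology on `Ā`: any point of an intersection of two such sets lies in a
third one contained in the intersection, and the sets cover `Ā`. -/
theorem gamma_isTopologicalBasis (S : RootWeightSystem A) :
    TopologicalSpace.IsTopologicalBasis
      {V : Set S.Abar | ∃ (F : S.Faces) (U : Set A),
        IsOpen U ∧ IsBounded U ∧ V = S.Gamma F U} ∧
    (∀ (F₁ F₂ : S.Faces) (U₁ U₂ : Set A), IsOpen U₁ → IsBounded U₁ →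
      IsOpen U₂ → IsBounded U₂ → ∀ z ∈ S.Gamma F₁ U₁ ∩ S.Gamma F₂ U₂,
        ∃ (F : S.Faces) (U : Set A), IsOpen U ∧ IsBounded U ∧
          z ∈ S.Gamma F U ∧ S.Gamma F U ⊆ S.Gamma F₁ U₁ ∩ S.Gamma F₂ U₂) ∧
    ∀ p : S.Abar, ∃ (F : S.Faces) (U : Set A),
      IsOpen U ∧ IsBounded U ∧ p ∈ S.Gamma F U := by
  have part3 : ∀ p : S.Abar, ∃ (F : S.Faces) (U : Set A),
      IsOpen U ∧ IsBounded U ∧ p ∈ S.Gamma F U := by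
    intro p
    obtain ⟨⟨F, u⟩, rfl⟩ := Quot.exists_rep p
    obtain ⟨g0, hg0⟩ := isFace_nonempty S F.prop
    refine ⟨F, Metric.ball u 1, Metric.isOpen_ball, Metric.isBounded_ball,
      F, subset_closure, u + g0, Set.add_mem_add (Metric.mem_ball_self one_pos) hg0, ?_⟩
    apply (mkAbar_eq_iff S).mpr
    refine ⟨rfl, ?_⟩
    have h : u - (u + g0) = -g0 := by abel
    rw [h]
    exact Submodule.neg_mem _ (Submodule.subset_span hg0)
  have part2 : ∀ (F₁ F₂ : S.Faces) (U₁ U₂ : Set A), IsOpen U₁ → IsBounded U₁ →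
      IsOpen U₂ → IsBounded U₂ → ∀ z ∈ S.Gamma F₁ U₁ ∩ S.Gamma F₂ U₂,
        ∃ (F : S.Faces) (U : Set A), IsOpen U ∧ IsBounded U ∧
          z ∈ S.Gamma F U ∧ S.Gamma F U ⊆ S.Gamma F₁ U₁ ∩ S.Gamma F₂ U₂ := by
    intro F₁ F₂ U₁ U₂ hU₁o _ hU₂o _ z hz
    obtain ⟨⟨G, hGcl, u, hu, hzeq⟩, ⟨G', hG'cl, u', hu', hzeq'⟩⟩ := hz
    obtain ⟨hGG', hsub⟩ := (mkAbar_eq_iff S).mp (hzeq.symm.trans hzeq')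
    subst hGG'
    obtain ⟨Δ₁, Y₁, hb₁, hadm₁, hF₁⟩ := F₁.prop
    obtain ⟨Δ₂, Y₂, hb₂, hadm₂, hF₂⟩ := F₂.prop
    obtain ⟨Δg, Yg, hbg, hadmg, hG⟩ := G.prop
    obtain ⟨g0, hg0G⟩ := isFace_nonempty S G.prop
    have hg0 : g0 ∈ S.Face Δg Yg := by rw [← hG]; exact hg0G
    rw [hG] at hsub
    rw [hG, hF₁] at hGcl
    rw [hG, hF₂] at hG'cl
    obtain ⟨P, Q, hP, hQ, hPQ⟩ := span_face_decomp S hsub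
    have hg1 : P + g0 ∈ S.Face Δg Yg := by
      rcases hP with h | rfl
      · exact face_add_self S h hg0
      · rw [zero_add]; exact hg0
    have hg2 : Q + g0 ∈ S.Face Δg Yg := by
      rcases hQ with h | rfl
      · exact face_add_self S h hg0
      · rw [zero_add]; exact hg0
    rw [hF₁] at hu
    rw [hF₂] at hu'
    obtain ⟨u₁, hu₁, f₁, hf₁, hufe⟩ := Set.mem_add.mp hu
    obtain ⟨u₂, hu₂, f₂, hf₂, hufe'⟩ := Set.mem_add.mp hu'
    obtain ⟨ε₁, hε₁, hball₁⟩ := Metric.isOpen_iff.mp hU₁o u₁ hu₁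
    obtain ⟨ε₂, hε₂, hball₂⟩ := Metric.isOpen_iff.mp hU₂o u₂ hu₂
    set ε := min ε₁ ε₂ with hεdef
    have hε : 0 < ε := lt_min hε₁ hε₂
    set c : A := u + (Q + g0) with hcdef
    have hc2 : c = u₂ + f₂ + (P + g0) := by
      have hu'' : u = u' + (P - Q) := by rw [← hPQ]; abel
      rw [hcdef, hu'', ← hufe']; abel
    refine ⟨G, Metric.ball c ε, Metric.isOpen_ball, Metric.isBounded_ball, ?_, ?_⟩
    · refine ⟨G, subset_closure, c + g0,
        Set.add_mem_add (Metric.mem_ball_self hε) hg0G, ?_⟩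
      rw [hzeq]
      apply (mkAbar_eq_iff S).mpr
      refine ⟨rfl, ?_⟩
      have h : u - (c + g0) = -((Q + g0) + g0) := by rw [hcdef]; abel
      rw [h, hG]
      exact Submodule.neg_mem _ (Submodule.add_mem _ (Submodule.subset_span hg2)
        (Submodule.subset_span hg0))
    · rintro p ⟨F'', hF''cl, w, hw, hpeq⟩
      rw [hG] at hF''cl
      obtain ⟨v, hv, g', hg'G, hvg⟩ := Set.mem_add.mp hw
      have hg' : g' ∈ S.Face Δg Yg := by rw [← hG]; exact hg'G
      have hdist : ∀ y : A, dist (y + (v - c)) y = dist v c := by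
        intro y
        rw [dist_eq_norm, dist_eq_norm]
        congr 1
        abel
      constructor
      · refine ⟨F'', ?_, w, ?_, hpeq⟩
        · rw [hF₁]
          exact hF''cl.trans (closure_minimal hGcl isClosed_closure)
        · have hx1 : u₁ + (v - c) ∈ U₁ := by
            apply hball₁
            rw [Metric.mem_ball, hdist]
            exact lt_of_lt_of_le (Metric.mem_ball.mp hv) (min_le_left _ _)
          have hface : f₁ + (Q + g0) + g' ∈ S.Face Δ₁ Y₁ :=
            face_add_mem S (face_add_mem S hf₁ (hGcl hg2)) (hGcl hg')
          have hsum3 : (u₁ + (v - c)) + (f₁ + (Q + g0) + g') = w := by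
            rw [← hvg, hcdef, ← hufe]; abel
          rw [hF₁, ← hsum3]
          exact Set.add_mem_add hx1 hface
      · refine ⟨F'', ?_, w, ?_, hpeq⟩
        · rw [hF₂]
          exact hF''cl.trans (closure_minimal hG'cl isClosed_closure)
        · have hx2 : u₂ + (v - c) ∈ U₂ := by
            apply hball₂
            rw [Metric.mem_ball, hdist]
            exact lt_of_lt_of_le (Metric.mem_ball.mp hv) (min_le_right _ _)
          have hface : f₂ + (P + g0) + g' ∈ S.Face Δ₂ Y₂ :=
            face_add_mem S (face_add_mem S hf₂ (hG'cl hg1)) (hG'cl hg')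
          have hsum3 : (u₂ + (v - c)) + (f₂ + (P + g0) + g') = w := by
            rw [← hvg, hc2]; abel
          rw [hF₂, ← hsum3]
          exact Set.add_mem_add hx2 hface
  refine ⟨⟨?_, ?_, rfl⟩, part2, part3⟩
  · intro t₁ ht₁ t₂ ht₂ x hx
    obtain ⟨Fa, Ua, hao, hab, rfl⟩ := ht₁
    obtain ⟨Fb, Ub, hbo, hbb, rfl⟩ := ht₂
    obtain ⟨F, U, ho, hbd, hmem, hsub⟩ := part2 Fa Fb Ua Ub hao hab hbo hbb x hx
    exact ⟨S.Gamma F U, ⟨F, U, ho, hbd, rfl⟩, hmem, hsub⟩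
  · apply Set.sUnion_eq_univ_iff.mpr
    intro p
    obtain ⟨F, U, ho, hbd, hmem⟩ := part3 p
    exact ⟨S.Gamma F U, ⟨F, U, ho, hbd, rfl⟩, hmem⟩
end
end
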